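/- Let K be a field and M a finite J-trivial monoid. Then the family {x − x^ω : x ∈ M, x not idempotent}, regarded inside the monoid algebra MonoidAlgebra K M, is a K-basis of the Jacobson radical of MonoidAlgebra K M. -/

import Mathlib

/-- The `J`-preorder on a monoid: `x ≤_J y` iff `x = u * y * v` for some `u, v`. -/
def leJ {M : Type*} [Monoid M] (x y : M) : Prop := ∃ u v : M, x = u * y * v

/-- A monoid is `J`-trivial if `M x M = M y M` implies `x = y`. -/
def JTrivial (M : Type*) [Monoid M] : Prop :=
  ∀ x y : M, {z : M | ∃ u v : M, z = u * x * v} = {z : M | ∃ u v : M, z = u * y * v} → x = y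

open Classical

/-- `x ^ ω`: the unique idempotent among the positive powers of `x`
(in a finite `J`-trivial monoid it exists and is unique). -/
noncomputable def omegaPow {M : Type*} [Monoid M] (x : M) : M :=
  if h : ∃ e : M, IsIdempotentElem e ∧ ∃ n : ℕ, 0 < n ∧ e = x ^ n then h.choose else 1

/-!
For `m ∈ M`, the indicator of `{x | x * m = m = m * x}` is a character `χₘ` of `M`: by
`J`-triviality, `x * y` fixes `m` only if `x` and `y` do. Every `x - x^ω` lies in the common
kernel `I` of the `χₘ`. Conversely, modulo the span of these elements, `a` is congruent to its
image `b` under `x ↦ x^ω`, which is supported on idempotents; if `b ∈ I`, evaluating `χ_f` at a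
`J`-maximal `f` in the support of `b` recovers the coefficient of `f`, so `b = 0`. Hence the span
is `I`. Left multiplication by `x - x^ω` sends `m` to a combination of elements strictly `J`-below
`m`, so `I` is nil and lies in the radical, while the radical lies in every maximal ideal
`ker χₘ`. Linear independence holds because the coefficient of `x - x^ω` at a non-idempotent `y`
is `δ_{xy}`.
-/

section Monoid

variable {M : Type*} [Monoid M]

lemma leJ_refl (x : M) : leJ x x := ⟨1, 1, by simp⟩

lemma leJ_trans {x y z : M} (hxy : leJ x y) (hyz : leJ y z) : leJ x z := by
  obtain ⟨u, v, rfl⟩ := hxy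
  obtain ⟨p, q, rfl⟩ := hyz
  exact ⟨u * p, q * v, by simp only [mul_assoc]⟩

lemma leJ_mul_left (x m : M) : leJ (x * m) m := ⟨x, 1, by rw [mul_one]⟩

lemma leJ_mul_right (m x : M) : leJ (m * x) m := ⟨1, x, by rw [one_mul]⟩

lemma JTrivial.leJ_antisymm (hJ : JTrivial M) {x y : M} (hxy : leJ x y) (hyx : leJ y x) :
    x = y := by
  apply hJ
  ext z
  exact ⟨fun hz => leJ_trans hz hxy, fun hz => leJ_trans hz hyx⟩

lemma JTrivial.mul_eq_right_of_mul_mul_eq_right (hJ : JTrivial M) {x y m : M}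
    (h : x * (y * m) = m) : y * m = m :=
  hJ.leJ_antisymm (leJ_mul_left y m) ⟨x, 1, by rw [mul_one, h]⟩

lemma JTrivial.mul_eq_left_of_mul_mul_eq_left (hJ : JTrivial M) {x y m : M}
    (h : m * x * y = m) : m * x = m :=
  hJ.leJ_antisymm (leJ_mul_right m x) ⟨1, y, by rw [one_mul, h]⟩

def twoSidedStabilizer (m : M) : Submonoid M where
  carrier := {x | x * m = m ∧ m * x = m}
  one_mem' := ⟨one_mul m, mul_one m⟩
  mul_mem' {x y} hx hy :=
    ⟨by rw [mul_assoc, hy.1, hx.1], by rw [← mul_assoc, hx.2, hy.2]⟩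

lemma JTrivial.mul_mem_twoSidedStabilizer_iff (hJ : JTrivial M) {x y m : M} :
    x * y ∈ twoSidedStabilizer m ↔ x ∈ twoSidedStabilizer m ∧ y ∈ twoSidedStabilizer m := by
  refine ⟨fun ⟨hl, hr⟩ => ?_, fun ⟨hx, hy⟩ => mul_mem hx hy⟩
  rw [mul_assoc] at hl
  rw [← mul_assoc] at hr
  have hy : y * m = m := hJ.mul_eq_right_of_mul_mul_eq_right hl
  have hx : m * x = m := hJ.mul_eq_left_of_mul_mul_eq_left hr
  exact ⟨⟨by rwa [hy] at hl, hx⟩, ⟨hy, by rwa [hx] at hr⟩⟩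

/- A finite semigroup is a compact Hausdorff semigroup for the discrete topology. -/
lemma exists_isIdempotentElem_pow [Finite M] (x : M) :
    ∃ e : M, IsIdempotentElem e ∧ ∃ n : ℕ, 0 < n ∧ e = x ^ n := by
  let _ : TopologicalSpace M := ⊥
  have : DiscreteTopology M := ⟨rfl⟩
  obtain ⟨e, ⟨n, hn, rfl⟩, he⟩ := exists_idempotent_in_compact_subsemigroup
    (fun _ => continuous_of_discreteTopology) {y | ∃ n, 0 < n ∧ y = x ^ n}
    ⟨x, 1, one_pos, (pow_one x).symm⟩ (Set.toFinite _).isCompact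
    (by
      rintro _ ⟨i, hi, rfl⟩ _ ⟨j, -, rfl⟩
      exact ⟨i + j, by omega, (pow_add x i j).symm⟩)
  exact ⟨x ^ n, he, n, hn, rfl⟩

lemma omegaPow_spec [Finite M] (x : M) :
    IsIdempotentElem (omegaPow x) ∧ ∃ n : ℕ, 0 < n ∧ omegaPow x = x ^ n := by
  rw [omegaPow, dif_pos (exists_isIdempotentElem_pow x)]
  exact (exists_isIdempotentElem_pow x).choose_spec

lemma omegaPow_eq_self [Finite M] {x : M} (hx : IsIdempotentElem x) : omegaPow x = x := by
  obtain ⟨-, n, hn, he⟩ := omegaPow_spec x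
  rw [he, hx.pow_eq hn.ne']

lemma JTrivial.omegaPow_mul_eq_right_iff [Finite M] (hJ : JTrivial M) {x m : M} :
    omegaPow x * m = m ↔ x * m = m := by
  obtain ⟨-, n, hn, he⟩ := omegaPow_spec x
  rw [he]
  refine ⟨fun h => hJ.mul_eq_right_of_mul_mul_eq_right (x := x ^ (n - 1)) ?_, fun h => ?_⟩
  · rwa [← mul_assoc, ← pow_succ, Nat.sub_add_cancel hn]
  · clear he hn
    induction n with
    | zero => rw [pow_zero, one_mul]
    | succ k ih => rw [pow_succ, mul_assoc, h, ih]

noncomputable def jRank (m : M) : ℕ := Set.ncard {z : M | leJ z m}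

lemma jRank_le_card [Finite M] (m : M) : jRank m ≤ Nat.card M := Set.ncard_le_card _

lemma JTrivial.jRank_lt_jRank [Finite M] (hJ : JTrivial M) {y m : M} (hym : leJ y m)
    (hne : y ≠ m) : jRank y < jRank m := by
  refine Set.ncard_lt_ncard ⟨fun z hz => leJ_trans hz hym, fun hsub => hne ?_⟩
  exact hJ.leJ_antisymm hym (hsub (leJ_refl m))

end Monoid

lemma Ideal.le_jacobson_bot_of_forall_isNilpotent {R : Type*} [Ring R] {I : Ideal R}
    (hI : ∀ a ∈ I, IsNilpotent a) : I ≤ Ideal.jacobson ⊥ := by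
  intro x hx
  refine Ideal.mem_jacobson_iff.2 fun y => ?_
  obtain ⟨u, hu⟩ := (hI _ (I.mul_mem_left y hx)).isUnit_add_one
  refine ⟨↑u⁻¹, ?_⟩
  rw [Ideal.mem_bot, mul_assoc, ← mul_add_one, ← hu, Units.inv_mul, sub_self]

lemma AlgHom.jacobson_bot_le_ker {K A : Type*} [Field K] [Ring A] [Algebra K A]
    (φ : A →ₐ[K] K) : Ideal.jacobson ⊥ ≤ RingHom.ker φ :=
  sInf_le ⟨bot_le,
    RingHom.ker_isMaximal_of_surjective φ fun c => ⟨algebraMap K A c, φ.commutes c⟩⟩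

namespace JTrivial

variable {M : Type*} [Monoid M] (hJ : JTrivial M)

noncomputable def character (K : Type*) [MulZeroOneClass K] (m : M) : M →* K where
  toFun x := if x ∈ twoSidedStabilizer m then 1 else 0
  map_one' := if_pos (one_mem _)
  map_mul' x y := by
    simp only [hJ.mul_mem_twoSidedStabilizer_iff]
    split_ifs <;> simp_all

lemma character_apply {K : Type*} [MulZeroOneClass K] (m x : M) :
    hJ.character K m x = if x ∈ twoSidedStabilizer m then 1 else 0 := rfl

lemma character_omegaPow [Finite M] {K : Type*} [MonoidWithZero K] (m x : M) :
    hJ.character K m (omegaPow x) = hJ.character K m x := by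
  obtain ⟨-, n, hn, he⟩ := omegaPow_spec x
  rw [he, map_pow, character_apply]
  split_ifs
  · exact one_pow n
  · exact zero_pow hn.ne'

variable (K : Type*) [CommRing K]

noncomputable def algCharacter (m : M) : MonoidAlgebra K M →ₐ[K] K :=
  MonoidAlgebra.lift K K M (hJ.character K m)

noncomputable def charKernel : Ideal (MonoidAlgebra K M) :=
  ⨅ m : M, RingHom.ker (hJ.algCharacter K m)

end JTrivial

section MonoidAlgebra

open MonoidAlgebra

variable {K : Type*} [CommRing K] {M : Type*} [Monoid M]

variable (K) in
noncomputable def omegaDefect (x : M) : MonoidAlgebra K M := of K M x - of K M (omegaPow x)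

variable (K M) in
noncomputable def omegaDefectSpan : Submodule K (MonoidAlgebra K M) :=
  Submodule.span K (Set.range fun x : {x : M // ¬ IsIdempotentElem x} => omegaDefect K x.1)

lemma omegaDefect_eq_zero [Finite M] {x : M} (hx : IsIdempotentElem x) :
    omegaDefect K x = 0 := by
  rw [omegaDefect, omegaPow_eq_self hx, sub_self]

lemma of_mem_supported {s : Set M} {x : M} (hx : x ∈ s) : of K M x ∈ supported K K s := by
  rw [supported_eq_span_single]
  exact Submodule.subset_span ⟨x, hx, (of_apply K M x).symm⟩

lemma linearIndependent_omegaDefect [Finite M] :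
    LinearIndependent K (fun x : {x : M // ¬ IsIdempotentElem x} => omegaDefect K x.1) := by
  let coord : MonoidAlgebra K M →ₗ[K] ({x : M // ¬ IsIdempotentElem x} → K) :=
    LinearMap.pi fun y => (basis M K).coord y.1
  have hcoord : coord ∘ (fun x => omegaDefect K x.1) = fun x => Pi.single x 1 := by
    ext x y
    have hω : omegaPow x.1 ≠ y.1 := fun h => y.2 (h ▸ (omegaPow_spec x.1).1)
    change (of K M x.1 - of K M (omegaPow x.1)).coeff y = _
    simp [Finsupp.single_apply, Pi.single_apply, hω, Subtype.ext_iff, eq_comm]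
  exact LinearIndependent.of_comp coord (hcoord ▸ Pi.linearIndependent_single_one _ K)

lemma sub_mapDomain_omegaPow_mem_omegaDefectSpan [Finite M] (a : MonoidAlgebra K M) :
    a - mapDomain omegaPow a ∈ omegaDefectSpan K M := by
  induction a using MonoidAlgebra.induction_linear with
  | zero => simp
  | add a b ha hb => rw [mapDomain_add, add_sub_add_comm]; exact add_mem ha hb
  | single x r =>
    have hsingle : single x r - single (omegaPow x) r = r • omegaDefect K x := by
      rw [omegaDefect, smul_sub, smul_of, smul_of]
    rw [mapDomain_single, hsingle]
    by_cases hx : IsIdempotentElem x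
    · rw [omegaDefect_eq_zero hx, smul_zero]
      exact zero_mem _
    · exact Submodule.smul_mem _ r (Submodule.subset_span ⟨⟨x, hx⟩, rfl⟩)

namespace JTrivial

lemma algCharacter_of (hJ : JTrivial M) (m x : M) :
    hJ.algCharacter K m (of K M x) = hJ.character K m x :=
  lift_of _ x

lemma algCharacter_omegaDefect [Finite M] (hJ : JTrivial M) (m x : M) :
    hJ.algCharacter K m (omegaDefect K x) = 0 := by
  rw [omegaDefect, map_sub, algCharacter_of, algCharacter_of, character_omegaPow, sub_self]

lemma omegaDefectSpan_le_charKernel [Finite M] (hJ : JTrivial M) :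
    omegaDefectSpan K M ≤ (hJ.charKernel K).restrictScalars K := by
  rw [omegaDefectSpan, Submodule.span_le]
  rintro _ ⟨x, rfl⟩
  exact (Submodule.mem_iInf _).2 fun m => hJ.algCharacter_omegaDefect m x.1

lemma eq_zero_of_forall_algCharacter_eq_zero [Finite M] (hJ : JTrivial M) {b : MonoidAlgebra K M}
    (hb : ∀ y ∈ b.coeff.support, IsIdempotentElem y) (hχ : ∀ m, hJ.algCharacter K m b = 0) :
    b = 0 := by
  by_contra hne
  obtain ⟨f, hf, hmax⟩ := Finset.exists_max_image b.coeff.support jRank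
    (Finsupp.support_nonempty_iff.2 (by rwa [Ne, coeff_eq_zero]))
  have hχf : hJ.algCharacter K f b = b.coeff f := by
    rw [algCharacter, lift_apply, Finsupp.sum, Finset.sum_eq_single_of_mem f hf]
    · rw [character_apply, if_pos ⟨hb f hf, hb f hf⟩, smul_eq_mul, mul_one]
    · intro y hy hyf
      rw [character_apply, if_neg, smul_zero]
      intro hstab
      exact (hmax y hy).not_gt
        (hJ.jRank_lt_jRank ⟨1, f, by rw [one_mul, hstab.1]⟩ (Ne.symm hyf))
  exact Finsupp.mem_support_iff.1 hf (hχf ▸ hχ f)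

lemma charKernel_le_omegaDefectSpan [Finite M] (hJ : JTrivial M) :
    (hJ.charKernel K).restrictScalars K ≤ omegaDefectSpan K M := by
  intro a ha
  have hdiff := sub_mapDomain_omegaPow_mem_omegaDefectSpan a
  have hb : mapDomain omegaPow a = 0 := by
    refine hJ.eq_zero_of_forall_algCharacter_eq_zero (fun y hy => ?_) fun m => ?_
    · obtain ⟨x, -, rfl⟩ := Finset.mem_image.1 (Finsupp.mapDomain_support hy)
      exact (omegaPow_spec x).1
    · have hker := (Submodule.mem_iInf _).1 (hJ.omegaDefectSpan_le_charKernel hdiff) m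
      rw [RingHom.mem_ker, map_sub, sub_eq_zero] at hker
      rw [← hker]
      exact (Submodule.mem_iInf _).1 ha m
  rwa [hb, sub_zero] at hdiff

lemma omegaDefect_mul_of_mem_supported_jRank_lt [Finite M] (hJ : JTrivial M) (x m : M) :
    omegaDefect K x * of K M m ∈ supported K K {y | jRank y < jRank m} := by
  rw [omegaDefect, sub_mul, ← map_mul, ← map_mul]
  by_cases hxm : x * m = m
  · rw [hxm, hJ.omegaPow_mul_eq_right_iff.2 hxm, sub_self]
    exact zero_mem _
  · have hωm : omegaPow x * m ≠ m := mt hJ.omegaPow_mul_eq_right_iff.1 hxm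
    exact sub_mem (of_mem_supported (hJ.jRank_lt_jRank (leJ_mul_left _ _) hxm))
      (of_mem_supported (hJ.jRank_lt_jRank (leJ_mul_left _ _) hωm))

lemma mul_of_mem_supported_jRank_lt [Finite M] (hJ : JTrivial M) {a : MonoidAlgebra K M}
    (ha : a ∈ omegaDefectSpan K M) (m : M) :
    a * of K M m ∈ supported K K {y | jRank y < jRank m} := by
  induction ha using Submodule.span_induction with
  | mem _ h =>
    obtain ⟨x, rfl⟩ := h
    exact hJ.omegaDefect_mul_of_mem_supported_jRank_lt x.1 m
  | zero => rw [zero_mul]; exact zero_mem _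
  | add _ _ _ _ h₁ h₂ => rw [add_mul]; exact add_mem h₁ h₂
  | smul r _ _ h => rw [smul_mul_assoc]; exact Submodule.smul_mem _ r h

lemma mul_mem_supported_jRank_lt [Finite M] (hJ : JTrivial M) {a : MonoidAlgebra K M}
    (ha : a ∈ omegaDefectSpan K M) {n : ℕ} {v : MonoidAlgebra K M}
    (hv : v ∈ supported K K {y | jRank y < n + 1}) :
    a * v ∈ supported K K {y | jRank y < n} := by
  suffices supported K K {y | jRank y < n + 1} ≤
      (supported K K {y | jRank y < n}).comap (LinearMap.mulLeft K a) from this hv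
  rw [supported_eq_span_single, Submodule.span_le]
  rintro _ ⟨m, hm, rfl⟩
  exact supported_mono (fun y hy => lt_of_lt_of_le hy (Nat.lt_succ_iff.1 hm))
    (hJ.mul_of_mem_supported_jRank_lt ha m)

lemma isNilpotent_of_mem_omegaDefectSpan [Finite M] (hJ : JTrivial M) {a : MonoidAlgebra K M}
    (ha : a ∈ omegaDefectSpan K M) : IsNilpotent a := by
  have hpow : ∀ n, ∀ v ∈ supported K K {y : M | jRank y < n}, a ^ n * v = 0 := by
    intro n
    induction n with
    | zero =>
      intro v hv
      rw [pow_zero, one_mul]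
      ext y
      exact mem_supported'.1 hv y (Nat.not_lt_zero _)
    | succ n ih =>
      intro v hv
      rw [pow_succ, mul_assoc]
      exact ih _ (hJ.mul_mem_supported_jRank_lt ha hv)
  refine ⟨Nat.card M + 1, ?_⟩
  simpa only [map_one, mul_one] using
    hpow _ (of K M 1) (of_mem_supported (Nat.lt_succ_of_le (jRank_le_card 1)))

end JTrivial

end MonoidAlgebra

lemma JTrivial.charKernel_eq_jacobson {M : Type*} [Monoid M] [Finite M] (hJ : JTrivial M)
    (K : Type*) [Field K] : hJ.charKernel K = Ideal.jacobson ⊥ :=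
  le_antisymm
    (Ideal.le_jacobson_bot_of_forall_isNilpotent fun _ ha =>
      hJ.isNilpotent_of_mem_omegaDefectSpan (hJ.charKernel_le_omegaDefectSpan ha))
    (le_iInf fun m => (hJ.algCharacter K m).jacobson_bot_le_ker)

/-- For a finite `J`-trivial monoid `M` and a field `K`, the family
`(x - x^ω)`, for `x` ranging over the non-idempotent elements of `M`, is a `K`-basis of the
Jacobson radical of the monoid algebra `K[M]`: it is linearly independent and its `K`-span is
the radical. -/
theorem radical_basis (K : Type*) [Field K] {M : Type*} [Monoid M] [Fintype M]
    (hJ : JTrivial M) :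
    LinearIndependent K
      (fun x : {x : M // ¬ IsIdempotentElem x} =>
        (MonoidAlgebra.of K M x.1 - MonoidAlgebra.of K M (omegaPow x.1) :
          MonoidAlgebra K M)) ∧
    Submodule.span K
      (Set.range (fun x : {x : M // ¬ IsIdempotentElem x} =>
        (MonoidAlgebra.of K M x.1 - MonoidAlgebra.of K M (omegaPow x.1) :
          MonoidAlgebra K M)))
      = Submodule.restrictScalars K
          (Ideal.jacobson (⊥ : Ideal (MonoidAlgebra K M))) := by
  refine ⟨linearIndependent_omegaDefect, ?_⟩
  rw [← hJ.charKernel_eq_jacobson K]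
  exact le_antisymm hJ.omegaDefectSpan_le_charKernel hJ.charKernel_le_omegaDefectSpan
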